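/- arXiv:1910.11687 — 4 statements merged into one kernel-verified Lean document; each statement's English description precedes it below -/
import Mathlib

section
/- If E is a truncated Riesz space and f, g ∈ E⁺, then (f ∧ g)* = f* ∧ g*. -/
/-- The truncation commutes with binary infima on the positive cone. -/
theorem stmt3 {E : Type*} [Lattice E] [AddCommGroup E]
    [CovariantClass E E (· + ·) (· ≤ ·)] [Module ℝ E]
    (t : E → E) (htpos : ∀ f : E, 0 ≤ f → 0 ≤ t f)
    (htrunc : ∀ f g : E, 0 ≤ f → 0 ≤ g → t f ⊓ g = f ⊓ t g)
    (f g : E) (hf : 0 ≤ f) (hg : 0 ≤ g) : t (f ⊓ g) = t f ⊓ t g := by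
  -- t x ≤ x for x ≥ 0
  have hle : ∀ x : E, 0 ≤ x → t x ≤ x := by
    intro x hx
    have h1 : t (t x) ⊓ x = t x ⊓ t x := htrunc (t x) x (htpos x hx) hx
    rw [inf_idem] at h1
    calc t x = t (t x) ⊓ x := h1.symm
    _ ≤ x := inf_le_right
  -- key: for any h ≥ 0, t (f ⊓ g) ⊓ h = (t f ⊓ g) ⊓ h
  have key : ∀ h : E, 0 ≤ h → t (f ⊓ g) ⊓ h = (t f ⊓ g) ⊓ h := by
    intro h hh
    calc t (f ⊓ g) ⊓ h = (f ⊓ g) ⊓ t h := htrunc _ _ (le_inf hf hg) hh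
    _ = f ⊓ (g ⊓ t h) := by rw [inf_assoc]
    _ = f ⊓ (t g ⊓ h) := by rw [htrunc g h hg hh]
    _ = (f ⊓ t g) ⊓ h := by rw [inf_assoc]
    _ = (t f ⊓ g) ⊓ h := by rw [htrunc f g hf hg]
  -- choose h large enough
  have h0 : t (f ⊓ g) = t f ⊓ g := by
    have hh : (0:E) ≤ t (f ⊓ g) ⊔ (t f ⊓ g) :=
      le_trans (htpos _ (le_inf hf hg)) le_sup_left
    have := key _ hh
    rwa [inf_eq_left.mpr le_sup_left, inf_eq_left.mpr (le_sup_right : t f ⊓ g ≤ _)] at this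
  have h1 : t (t f) ⊓ g = t f ⊓ t g := htrunc (t f) g (htpos f hf) hg
  have h2 : t (t f) = t f :=
    le_antisymm (hle _ (htpos f hf)) (by
      have := htrunc f (t f) hf (htpos f hf)
      rw [inf_idem] at this
      calc t f = f ⊓ t (t f) := this
      _ ≤ t (t f) := inf_le_right)
  rw [h0, ← h1, h2]
end

section
/- If E is a truncated Riesz space and f, g ∈ E⁺, then (f ∨ g)* = f* ∨ g*. -/
/-- The truncation commutes with binary suprema on the positive cone. -/
theorem stmt4 {E : Type*} [Lattice E] [AddCommGroup E]
    [CovariantClass E E (· + ·) (· ≤ ·)] [Module ℝ E]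
    (t : E → E) (htpos : ∀ f : E, 0 ≤ f → 0 ≤ t f)
    (htrunc : ∀ f g : E, 0 ≤ f → 0 ≤ g → t f ⊓ g = f ⊓ t g)
    (f g : E) (hf : 0 ≤ f) (hg : 0 ≤ g) : t (f ⊔ g) = t f ⊔ t g := by
  letI : DistribLattice E := AddCommGroup.toDistribLattice E
  -- t x ≤ x for 0 ≤ x
  have hle : ∀ x : E, 0 ≤ x → t x ≤ x := by
    intro x hx
    have h := htrunc x (t x) hx (htpos x hx)
    rw [inf_idem] at h
    rw [h]; exact inf_le_left
  have hfg : (0:E) ≤ f ⊔ g := le_trans hf le_sup_left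
  have h1 : t (f ⊔ g) ⊓ f = t f := by
    rw [htrunc (f ⊔ g) f hfg hf]
    exact inf_eq_right.mpr ((hle f hf).trans le_sup_left)
  have h2 : t (f ⊔ g) ⊓ g = t g := by
    rw [htrunc (f ⊔ g) g hfg hg]
    exact inf_eq_right.mpr ((hle g hg).trans le_sup_right)
  have h3 : t (f ⊔ g) ⊓ (f ⊔ g) = t (f ⊔ g) :=
    inf_eq_left.mpr (hle _ hfg)
  calc t (f ⊔ g) = t (f ⊔ g) ⊓ (f ⊔ g) := h3.symm
    _ = (t (f ⊔ g) ⊓ f) ⊔ (t (f ⊔ g) ⊓ g) := inf_sup_left _ _ _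
    _ = t f ⊔ t g := by rw [h1, h2]
end

section
/- If E is a truncated Riesz space and f, g ∈ E⁺, then |f* − g*| ≤ |f − g|*. -/
/-- Auxiliary: in a lattice-ordered group, `(a+b) ⊓ c ≤ a ⊓ c + b ⊓ c` for nonneg elements. -/
theorem stmt5_inf_add {E : Type*} [Lattice E] [AddCommGroup E]
    [CovariantClass E E (· + ·) (· ≤ ·)]
    (a b c : E) (ha : 0 ≤ a) (hb : 0 ≤ b) (hc : 0 ≤ c) :
    (a + b) ⊓ c ≤ a ⊓ c + b ⊓ c := by
  have h1 : a ⊓ c + b ⊓ c = ((a + b) ⊓ (a + c)) ⊓ ((c + b) ⊓ (c + c)) := by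
    rw [add_inf, inf_add, inf_add, inf_inf_inf_comm]
  rw [h1]
  refine le_inf (le_inf inf_le_left ?_) (le_inf ?_ ?_)
  · exact le_trans inf_le_right (le_add_of_nonneg_left ha)
  · exact le_trans inf_le_right (le_add_of_nonneg_right hb)
  · exact le_trans inf_le_right (le_add_of_nonneg_left hc)

/-- `|t f − t g| ≤ t |f − g|` for positive `f, g`. -/
theorem stmt5 {E : Type*} [Lattice E] [AddCommGroup E]
    [CovariantClass E E (· + ·) (· ≤ ·)] [Module ℝ E]
    (t : E → E) (htpos : ∀ f : E, 0 ≤ f → 0 ≤ t f)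
    (htrunc : ∀ f g : E, 0 ≤ f → 0 ≤ g → t f ⊓ g = f ⊓ t g)
    (f g : E) (hf : 0 ≤ f) (hg : 0 ≤ g) : |t f - t g| ≤ t |f - g| := by
  -- t a = a ⊓ t (t a), hence t a ≤ a
  have heq : ∀ a : E, 0 ≤ a → t a = a ⊓ t (t a) := by
    intro a ha
    have := htrunc a (t a) ha (htpos a ha)
    simpa using this
  -- key: f ≤ g + h with all nonneg implies t f ≤ t g + t h
  have key : ∀ a b c : E, 0 ≤ a → 0 ≤ b → 0 ≤ c → a ≤ b + c → t a ≤ t b + t c := by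
    intro a b c ha hb hc habc
    have h1 : t a ≤ (b + c) ⊓ t (t a) := by
      conv_lhs => rw [heq a ha]
      exact le_inf (le_trans inf_le_left habc) inf_le_right
    have h2 : (b + c) ⊓ t (t a) ≤ b ⊓ t (t a) + c ⊓ t (t a) :=
      stmt5_inf_add b c (t (t a)) hb hc (htpos _ (htpos a ha))
    have h3 : b ⊓ t (t a) = t b ⊓ t a := by rw [← htrunc b (t a) hb (htpos a ha)]
    have h4 : c ⊓ t (t a) = t c ⊓ t a := by rw [← htrunc c (t a) hc (htpos a ha)]
    calc t a ≤ b ⊓ t (t a) + c ⊓ t (t a) := le_trans h1 h2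
      _ = t b ⊓ t a + t c ⊓ t a := by rw [h3, h4]
      _ ≤ t b + t c := add_le_add inf_le_left inf_le_left
  have habs : (0:E) ≤ |f - g| := abs_nonneg _
  have hfg : f ≤ g + |f - g| := sub_le_iff_le_add'.mp (le_abs_self _)
  have hgf : g ≤ f + |f - g| := by
    have h : -(f - g) ≤ |f - g| := neg_le_abs _
    rw [neg_sub] at h
    exact sub_le_iff_le_add'.mp h
  have h1 : t f - t g ≤ t |f - g| :=
    sub_le_iff_le_add'.mpr (key f g |f - g| hf hg habs hfg)
  have h2 : -(t f - t g) ≤ t |f - g| := by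
    rw [neg_sub]
    exact sub_le_iff_le_add'.mpr (key g f |f - g| hg hf habs hgf)
  exact abs_le'.mpr ⟨h1, h2⟩
end

section
/- Let X be a locally compact Hausdorff space and equip E = C₀(X) with the truncation f* = 1 ∧ f on E⁺. Then every *-Cauchy sequence in E is *-convergent in E; i.e. C₀(X) is *-uniformly complete. -/
open ZeroAtInfty

/-- `C₀(X)` with the truncation `f* = 1 ∧ f` (pointwise `min 1 (f x)`) is
`*`-uniformly complete: every `*`-Cauchy sequence `*`-converges.  Being a fixed point of
the truncation is expressed pointwise: `g* = g` means `min 1 (g x) = g x` for all `x`. -/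
theorem stmt16 {X : Type*} [TopologicalSpace X] [LocallyCompactSpace X] [T2Space X]
    (f : ℕ → C₀(X, ℝ))
    (hCauchy : ∀ ε : ℝ, 0 < ε → ∃ N : ℕ, ∀ m ≥ N, ∀ n ≥ N, ∀ x : X,
      min 1 (ε * |f m x - f n x|) = ε * |f m x - f n x|) :
    ∃ g : C₀(X, ℝ), ∀ ε : ℝ, 0 < ε → ∃ N : ℕ, ∀ n ≥ N, ∀ x : X,
      min 1 (ε * |f n x - g x|) = ε * |f n x - g x| := by
  -- key translation: min 1 a = a ↔ a ≤ 1
  have key : ∀ ε : ℝ, 0 < ε →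
      ∃ N : ℕ, ∀ m ≥ N, ∀ n ≥ N, ∀ x : X, |f m x - f n x| ≤ 1 / ε := by
    intro ε hε
    obtain ⟨N, hN⟩ := hCauchy ε hε
    refine ⟨N, fun m hm n hn x => ?_⟩
    have h := hN m hm n hn x
    have h1 : ε * |f m x - f n x| ≤ 1 := by
      by_contra hgt
      push_neg at hgt
      have := min_eq_left (le_of_lt hgt)
      rw [h] at this
      linarith
    rw [le_div_iff₀ hε]
    linarith [h1]
  -- f is a Cauchy sequence
  have hC : CauchySeq f := by
    rw [Metric.cauchySeq_iff]
    intro δ hδ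
    obtain ⟨N, hN⟩ := key (2 / δ) (by positivity)
    refine ⟨N, fun m hm n hn => ?_⟩
    have : dist (f m) (f n) ≤ δ / 2 := by
      rw [← ZeroAtInftyContinuousMap.dist_toBCF_eq_dist]
      refine (BoundedContinuousFunction.dist_le (by positivity)).2 fun x => ?_
      have := hN m hm n hn x
      rw [one_div, inv_div] at this
      simpa [Real.dist_eq] using this
    linarith
  obtain ⟨g, hg⟩ := cauchySeq_tendsto_of_complete hC
  refine ⟨g, fun ε hε => ?_⟩
  obtain ⟨N, hN⟩ := key (2 * ε) (by positivity)
  refine ⟨N, fun n hn x => ?_⟩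
  -- pointwise limit: |f n x - g x| ≤ 1/(2ε)
  have hpt : LipschitzWith 1 fun y : C₀(X, ℝ) => y x :=
    LipschitzWith.of_dist_le_mul fun a b => by
      rw [NNReal.coe_one, one_mul]
      calc dist (a x) (b x) = dist (a.toBCF x) (b.toBCF x) := rfl
        _ ≤ dist a.toBCF b.toBCF := BoundedContinuousFunction.dist_coe_le_dist x
        _ = dist a b := ZeroAtInftyContinuousMap.dist_toBCF_eq_dist
  have hlim : Filter.Tendsto (fun m => f m x) Filter.atTop (nhds (g x)) :=
    (hpt.continuous.tendsto g).comp hg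
  have hle : |f n x - g x| ≤ 1 / (2 * ε) := by
    have : Filter.Tendsto (fun m => |f n x - f m x|) Filter.atTop
        (nhds |f n x - g x|) := by
      exact ((continuous_abs.tendsto _).comp (tendsto_const_nhds.sub hlim))
    refine le_of_tendsto this ?_
    filter_upwards [Filter.eventually_ge_atTop N] with m hm
    exact hN n hn m hm x
  have : ε * |f n x - g x| ≤ 1 := by
    rw [le_div_iff₀ (by positivity)] at hle
    nlinarith [abs_nonneg (f n x - g x)]
  exact min_eq_right this
end
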